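/- Let P̄_0 be a non-separable preference over 2^𝒪 with t(P̄_0) ≠ ∅. Then the tops-only extension of the rule f^> to the domain 𝒮 ∪ {P̄_0} violates participation: there exist a society N with |N| ≥ 2, a voter i ∈ N, and a profile P_N ∈ (𝒮 ∪ {P̄_0})^N such that f(P_{N\{i}}) P_i f(P_N). -/

import Mathlib

/-! ## Basic framework: preferences, profiles, voting rules, axioms -/

/-- A preference is a strict linear order on the set `A` of alternatives, encoded as a
`LinearOrder` structure on `A`; alternative `x` is strictly preferred to `y` iff `y < x`
(i.e. "greater is better"). -/
abbrev Pref (A : Type*) := LinearOrder A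

/-- Strict preference: `x` is strictly preferred to `y` under `p`. -/
def Pref.pref {A : Type*} (p : Pref A) (x y : A) : Prop := p.lt y x

/-- Weak preference (the weak counterpart `R` of the strict preference `P`):
`x` is weakly preferred to `y` under `p`. -/
def Pref.wpref {A : Type*} (p : Pref A) (x y : A) : Prop := p.le y x

/-- The top (most preferred) alternative of a preference. -/
noncomputable def Pref.top {A : Type*} [Fintype A] [Nonempty A] (p : Pref A) : A :=
  @Finset.max' A p Finset.univ Finset.univ_nonempty

/-- The bottom (least preferred) alternative of a preference. -/
noncomputable def Pref.bot {A : Type*} [Fintype A] [Nonempty A] (p : Pref A) : A :=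
  @Finset.min' A p Finset.univ Finset.univ_nonempty

/-- A profile over the society `N` (a finite set of voters, indexed by naturals):
it assigns a preference to each member of `N`. -/
abbrev Profile (A : Type*) (N : Finset ℕ) := (i : ℕ) → i ∈ N → Pref A

/-- The profile `P` takes values in the domain `D` of preferences. -/
def Profile.inDomain {A : Type*} {N : Finset ℕ} (P : Profile A N) (D : Set (Pref A)) : Prop :=
  ∀ i (hi : i ∈ N), P i hi ∈ D

/-- A (variable-population) voting rule: it assigns an alternative to every society
together with a profile over it. -/
abbrev Rule (A : Type*) := (N : Finset ℕ) → Profile A N → A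

/-- Ontoness on the domain `D`: for every society and every alternative, some
`D`-profile realizes that alternative. -/
def OntoOn {A : Type*} (D : Set (Pref A)) (f : Rule A) : Prop :=
  ∀ N : Finset ℕ, N.Nonempty → ∀ a : A, ∃ P : Profile A N, P.inDomain D ∧ f N P = a

/-- Tops-onliness on the domain `D`: two `D`-profiles with the same tops get the
same outcome. -/
def TopsOnlyOn {A : Type*} [Fintype A] [Nonempty A] (D : Set (Pref A)) (f : Rule A) : Prop :=
  ∀ N : Finset ℕ, N.Nonempty → ∀ P P' : Profile A N, P.inDomain D → P'.inDomain D →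
    (∀ i (hi : i ∈ N), (P i hi).top = (P' i hi).top) → f N P = f N P'

/-- False-name-proofness on the domain `D`: if a voter `i` of the society `N` casts,
under fresh identities `N'`, extra votes identical to her own preference, the outcome
does not improve for her. -/
def FalseNameProofOn {A : Type*} (D : Set (Pref A)) (f : Rule A) : Prop :=
  ∀ N N' : Finset ℕ, N.Nonempty → N'.Nonempty → Disjoint N N' →
    ∀ P : Profile A (N ∪ N'), P.inDomain D →
      ∀ i (hi : i ∈ N),
        (∀ j (hj : j ∈ N'),
            P j (Finset.mem_union_right N hj) = P i (Finset.mem_union_left N' hi)) →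
        (P i (Finset.mem_union_left N' hi)).wpref
          (f N (fun j hj => P j (Finset.mem_union_left N' hj)))
          (f (N ∪ N') P)

/-- Participation on the domain `D`: no voter gains by abstaining. -/
def ParticipationOn {A : Type*} (D : Set (Pref A)) (f : Rule A) : Prop :=
  ∀ N : Finset ℕ, 2 ≤ N.card → ∀ P : Profile A N, P.inDomain D →
    ∀ i (hi : i ∈ N),
      (P i hi).wpref (f N P) (f (N.erase i) (fun j hj => P j (Finset.mem_of_mem_erase hj)))

lemma mem_of_mem_image_perm {σ : Equiv.Perm ℕ} {N : Finset ℕ} {j : ℕ}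
    (hj : j ∈ N.image σ) : σ.symm j ∈ N := by
  obtain ⟨i, hi, rfl⟩ := Finset.mem_image.mp hj
  simpa using hi

/-- The permuted profile `σ(P_N)` over the society `σ(N)`: voter `σ i` gets the
preference `P i`. -/
def permProfile {A : Type*} (σ : Equiv.Perm ℕ) {N : Finset ℕ} (P : Profile A N) :
    Profile A (N.image σ) :=
  fun j hj => P (σ.symm j) (mem_of_mem_image_perm hj)

/-- Anonymity on the domain `D`: permuting the voters' identities does not change
the outcome. -/
def AnonymousOn {A : Type*} (D : Set (Pref A)) (f : Rule A) : Prop :=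
  ∀ (σ : Equiv.Perm ℕ) (N : Finset ℕ), N.Nonempty → ∀ P : Profile A N, P.inDomain D →
    f (N.image σ) (permProfile σ P) = f N P

/-- Relabeling a preference along a permutation `γ` of the alternatives: in the new
preference, `γ x` is strictly preferred to `γ y` iff `x` was strictly preferred to `y`. -/
noncomputable def Pref.relabel {A : Type*} (p : Pref A) (γ : Equiv.Perm A) : Pref A :=
  @LinearOrder.lift' A A p γ.symm γ.symm.injective

/-- Neutrality on the domain `D`: relabeling the alternatives by a permutation `γ`
relabels the outcome accordingly. -/
def NeutralOn {A : Type*} (D : Set (Pref A)) (f : Rule A) : Prop :=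
  ∀ (γ : Equiv.Perm A) (N : Finset ℕ), N.Nonempty → ∀ P : Profile A N, P.inDomain D →
    γ (f N P) = f N (fun i hi => (P i hi).relabel γ)

/-! ## The domain of preferences over subsets of a set `O` of objects -/

/-- Object neutrality: permuting the objects by `μ` (which permutes every subset of
objects pointwise) relabels the outcome accordingly. -/
def ObjectNeutralOn {O : Type*} [Fintype O] [DecidableEq O]
    (D : Set (Pref (Finset O))) (f : Rule (Finset O)) : Prop :=
  ∀ (μ : Equiv.Perm O) (N : Finset ℕ), N.Nonempty →
    ∀ P : Profile (Finset O) N, P.inDomain D →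
      (f N P).image μ = f N (fun i hi => (P i hi).relabel μ.finsetCongr)

/-- A preference over subsets of objects is separable if adding an object `x ∉ S` to a
set `S` improves the set exactly when `{x}` is preferred to `∅`. -/
def Separable {O : Type*} [Fintype O] [DecidableEq O] (p : Pref (Finset O)) : Prop :=
  ∀ (S : Finset O) (x : O), x ∉ S → (p.pref (insert x S) S ↔ p.pref {x} (∅ : Finset O))

/-- The domain of separable preferences over subsets of objects. -/
def SepDom (O : Type*) [Fintype O] [DecidableEq O] : Set (Pref (Finset O)) :=
  {p | Separable p}

/-- `t(P_N)`: the set of distinct top sets of the profile `P`. -/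
noncomputable def distinctTops {O : Type*} [Fintype O] [DecidableEq O] {N : Finset ℕ}
    (P : Profile (Finset O) N) : Finset (Finset O) :=
  N.attach.image fun i => (P i.1 i.2).top

/-- The rule `f^>`: an object is chosen iff it belongs to strictly more than half of the
distinct top sets of the profile. -/
noncomputable def fGt (O : Type*) [Fintype O] [DecidableEq O] : Rule (Finset O) :=
  fun N P =>
    Finset.univ.filter fun x =>
      (distinctTops P).card < 2 * ((distinctTops P).filter fun T => x ∈ T).card

/-- The rule `f^≥`: an object is chosen iff it belongs to at least half of the
distinct top sets of the profile. -/
noncomputable def fGe (O : Type*) [Fintype O] [DecidableEq O] : Rule (Finset O) :=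
  fun N P =>
    Finset.univ.filter fun x =>
      (distinctTops P).card ≤ 2 * ((distinctTops P).filter fun T => x ∈ T).card

/-- `g` is the tops-only extension to the domain `Dbig` (⊇ separable preferences) of the
tops-only rule `f` defined on the separable domain: on every `Dbig`-profile `P`, `g`
agrees with the value of `f` at any separable profile `Q` having the same tops as `P`. -/
def IsTopsOnlyExtensionOn {O : Type*} [Fintype O] [DecidableEq O]
    (Dbig : Set (Pref (Finset O))) (f g : Rule (Finset O)) : Prop :=
  ∀ N : Finset ℕ, N.Nonempty →
    ∀ P : Profile (Finset O) N, P.inDomain Dbig →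
      ∀ Q : Profile (Finset O) N, Q.inDomain (SepDom O) →
        (∀ i (hi : i ∈ N), (P i hi).top = (Q i hi).top) → g N P = f N Q

/-! A non-separable `P0` misorders some pair `B`, `insert a B` with `a ∉ B`: either `a ∈ t(P0)`
but `B` is ranked above `insert a B`, or `a ∉ t(P0)` but `insert a B` is ranked above `B`.
Add a `P0`-voter to separable voters with tops `{B, insert a B}` in the first case and
`{insert a B, B, insert a B ∆ t(P0)}` in the second (three distinct tops because `t(P0) ≠ ∅`).
Counting memberships shows that `f^>` returns the alternative `P0` prefers without her, and the
other one once her top joins; since the extension only sees tops, she gains by abstaining. -/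
open scoped symmDiff

namespace Pref

lemma pref_of_not_pref {A : Type*} (p : Pref A) {a b : A} (hab : a ≠ b) (h : ¬ p.pref b a) :
    p.pref a b :=
  @lt_of_le_of_ne A p.toPartialOrder _ _ (@le_of_not_gt A p _ _ h) hab.symm

variable {A : Type*} [Fintype A] [Nonempty A] (p : Pref A)

lemma wpref_top (a : A) : p.wpref p.top a :=
  @Finset.le_max' A p _ _ (Finset.mem_univ a)

lemma not_pref_top (a : A) : ¬ p.pref a p.top :=
  @not_lt_of_ge A p.toPreorder _ _ (p.wpref_top a)

lemma top_eq_of_forall_wpref {a : A} (h : ∀ b, p.wpref a b) : p.top = a :=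
  @le_antisymm A p.toPartialOrder _ _
    (@Finset.max'_le A p _ _ _ fun b _ => h b) (p.wpref_top a)

end Pref

section SeparablePref

variable {O : Type*} [Fintype O] [DecidableEq O]

/-- `S` is preferred to `S'` when `S ∆ T` precedes `S' ∆ T` in colex order, for an arbitrary
enumeration of the objects; moving a set towards `T` by one object makes it strictly better. -/
noncomputable def sepPref (T : Finset O) : Pref (Finset O) :=
  LinearOrder.lift'
    (fun S => OrderDual.toDual (toColex ((S ∆ T).map (Fintype.equivFin O).toEmbedding)))
    fun _ _ h => symmDiff_left_injective T (Finset.map_injective _ (toColex_inj.1 h))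

lemma sepPref_pref_of_ssubset {T S S' : Finset O} (h : S ∆ T ⊂ S' ∆ T) :
    (sepPref T).pref S S' :=
  Finset.Colex.toColex_lt_toColex_of_ssubset (Finset.map_ssubset_map.2 h)

lemma sepPref_pref_insert_iff (T : Finset O) {S : Finset O} {x : O} (hxS : x ∉ S) :
    (sepPref T).pref (insert x S) S ↔ x ∈ T := by
  by_cases hxT : x ∈ T
  · refine iff_of_true (sepPref_pref_of_ssubset ?_) hxT
    have : insert x S ∆ T = (S ∆ T).erase x := by
      ext y; by_cases hy : y = x <;> simp [Finset.mem_symmDiff, hy, hxS, hxT]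
    rw [this]
    exact Finset.erase_ssubset (by simp [Finset.mem_symmDiff, hxS, hxT])
  · refine iff_of_false (fun h => @lt_asymm _ (sepPref T).toPreorder _ _ h
      (sepPref_pref_of_ssubset ?_)) hxT
    have : insert x S ∆ T = insert x (S ∆ T) := by
      ext y; by_cases hy : y = x <;> simp [Finset.mem_symmDiff, hy, hxS, hxT]
    rw [this]
    exact Finset.ssubset_insert (by simp [Finset.mem_symmDiff, hxS, hxT])

lemma separable_sepPref (T : Finset O) : Separable (sepPref T) := fun S x hxS => by
  rw [sepPref_pref_insert_iff T hxS, ← Finset.insert_empty,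
    sepPref_pref_insert_iff T (Finset.notMem_empty x)]

lemma sepPref_top (T : Finset O) : (sepPref T).top = T :=
  (sepPref T).top_eq_of_forall_wpref fun S =>
    Finset.Colex.toColex_le_toColex_of_subset
      (s := (T ∆ T).map (Fintype.equivFin O).toEmbedding)
      (t := (S ∆ T).map (Fintype.equivFin O).toEmbedding) (by simp)

end SeparablePref

section StrictMajority

variable {O : Type*} [Fintype O] [DecidableEq O]

noncomputable def strictMajority (𝒯 : Finset (Finset O)) : Finset O :=
  Finset.univ.filter fun x => 𝒯.card < 2 * (𝒯.filter fun T => x ∈ T).card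

lemma fGt_eq_strictMajority {N : Finset ℕ} (P : Profile (Finset O) N) :
    fGt O N P = strictMajority (distinctTops P) := rfl

lemma mem_strictMajority_toFinset {l : List (Finset O)} (hl : l.Nodup) (x : O) :
    x ∈ strictMajority l.toFinset ↔ l.length < 2 * l.countP (fun T => x ∈ T) := by
  have hfilter : (l.toFinset.filter fun T => x ∈ T) = (l.filter fun T => x ∈ T).toFinset := by
    ext; simp
  rw [strictMajority, Finset.mem_filter, hfilter, List.toFinset_card_of_nodup hl,
    List.toFinset_card_of_nodup (hl.filter _), List.countP_eq_length_filter]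
  simp

variable {t B : Finset O} {a : O}

lemma strictMajority_pair (haB : a ∉ B) : strictMajority {B, insert a B} = B := by
  have hne : B ≠ insert a B := fun h => haB (h ▸ Finset.mem_insert_self a B)
  ext x
  rw [show ({B, insert a B} : Finset (Finset O)) = [B, insert a B].toFinset by simp,
    mem_strictMajority_toFinset (by simpa using hne)]
  by_cases hx : x ∈ B <;> by_cases hxa : x = a <;> simp_all

lemma strictMajority_insert_pair (hat : a ∈ t) (haB : a ∉ B) (htaB : t ≠ insert a B) :
    strictMajority {t, B, insert a B} = insert a B := by
  have hne : B ≠ insert a B := fun h => haB (h ▸ Finset.mem_insert_self a B)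
  have htB : t ≠ B := fun h => haB (h ▸ hat)
  ext x
  rw [show ({t, B, insert a B} : Finset (Finset O)) = [t, B, insert a B].toFinset by simp,
    mem_strictMajority_toFinset (by simp [hne, htB, htaB])]
  by_cases hxt : x ∈ t <;> by_cases hx : x ∈ B <;> by_cases hxa : x = a <;>
    simp_all

lemma strictMajority_triple (haB : a ∉ B) (hat : a ∉ t) (ht : t.Nonempty) :
    strictMajority {insert a B, B, insert a B ∆ t} = insert a B := by
  have h1 : insert a B ≠ B := fun h => haB (h ▸ Finset.mem_insert_self a B)
  have h2 : insert a B ≠ insert a B ∆ t := fun h => ht.ne_empty (symmDiff_eq_left.1 h.symm)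
  have h3 : B ≠ insert a B ∆ t := fun h => haB (h ▸ by simp [Finset.mem_symmDiff, hat])
  ext x
  rw [show ({insert a B, B, insert a B ∆ t} : Finset (Finset O)) =
      [insert a B, B, insert a B ∆ t].toFinset by simp,
    mem_strictMajority_toFinset (by simp [h1, h2, h3])]
  by_cases hxt : x ∈ t <;> by_cases hx : x ∈ B <;> by_cases hxa : x = a <;>
    simp_all [Finset.mem_symmDiff]

lemma strictMajority_insert_triple (haB : a ∉ B) (hat : a ∉ t) (ht : t.Nonempty)
    (htB : t ≠ B) :
    strictMajority {t, insert a B, B, insert a B ∆ t} = B := by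
  have h1 : insert a B ≠ B := fun h => haB (h ▸ Finset.mem_insert_self a B)
  have h2 : insert a B ≠ insert a B ∆ t := fun h => ht.ne_empty (symmDiff_eq_left.1 h.symm)
  have h3 : B ≠ insert a B ∆ t := fun h => haB (h ▸ by simp [Finset.mem_symmDiff, hat])
  have h4 : t ≠ insert a B := fun h => hat (h ▸ Finset.mem_insert_self a B)
  have h5 : t ≠ insert a B ∆ t := fun h => hat (h ▸ by simp [Finset.mem_symmDiff, hat])
  ext x
  rw [show ({t, insert a B, B, insert a B ∆ t} : Finset (Finset O)) =
      [t, insert a B, B, insert a B ∆ t].toFinset by simp,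
    mem_strictMajority_toFinset (by simp [h1, h2, h3, h4, h5, htB])]
  by_cases hxt : x ∈ t <;> by_cases hx : x ∈ B <;> by_cases hxa : x = a <;>
    simp_all [Finset.mem_symmDiff]

end StrictMajority

section Participation

variable {O : Type*} [Fintype O] [DecidableEq O]

lemma mem_distinctTops {N : Finset ℕ} {P : Profile (Finset O) N} {T : Finset O} :
    T ∈ distinctTops P ↔ ∃ i, ∃ hi : i ∈ N, (P i hi).top = T := by
  simp [distinctTops]

lemma distinctTops_eq_insert_erase {N : Finset ℕ} (P : Profile (Finset O) N) {i : ℕ}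
    (hi : i ∈ N) :
    distinctTops P = insert (P i hi).top
      (distinctTops fun j (hj : j ∈ N.erase i) => P j (Finset.mem_of_mem_erase hj)) := by
  ext T
  simp only [Finset.mem_insert, mem_distinctTops, Finset.mem_erase]
  constructor
  · rintro ⟨j, hj, rfl⟩
    by_cases hji : j = i
    · subst hji; exact Or.inl rfl
    · exact Or.inr ⟨j, ⟨hji, hj⟩, rfl⟩
  · rintro (rfl | ⟨j, ⟨_, hj⟩, rfl⟩)
    exacts [⟨i, hi, rfl⟩, ⟨j, hj, rfl⟩]

/-- The separable profile required by `IsTopsOnlyExtensionOn` always exists: `sepPref` realizes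
every top. -/
lemma IsTopsOnlyExtensionOn.eq_strictMajority {D : Set (Pref (Finset O))} {g : Rule (Finset O)}
    (hg : IsTopsOnlyExtensionOn D (fGt O) g) {N : Finset ℕ} (hN : N.Nonempty)
    {P : Profile (Finset O) N} (hP : P.inDomain D) :
    g N P = strictMajority (distinctTops P) := by
  have htops : ∀ i (hi : i ∈ N), (P i hi).top = (sepPref (P i hi).top).top :=
    fun i hi => (sepPref_top _).symm
  rw [hg N hN P hP _ (fun i hi => separable_sepPref _) htops, fGt_eq_strictMajority]
  simp only [distinctTops, sepPref_top]

/-- Witness: voter `0` holds `P0`, and each `T ∈ 𝒯` is the top of one separable voter. -/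
lemma exists_participation_failure {P0 : Pref (Finset O)} {g : Rule (Finset O)}
    (hg : IsTopsOnlyExtensionOn (SepDom O ∪ {P0}) (fGt O) g) {𝒯 : Finset (Finset O)}
    (h𝒯 : 𝒯.Nonempty)
    (h : P0.pref (strictMajority 𝒯) (strictMajority (insert P0.top 𝒯))) :
    ∃ (N : Finset ℕ) (_ : 2 ≤ N.card) (i : ℕ) (hi : i ∈ N) (P : Profile (Finset O) N),
      P.inDomain (SepDom O ∪ {P0}) ∧
      (P i hi).pref (g (N.erase i) (fun j hj => P j (Finset.mem_of_mem_erase hj))) (g N P) := by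
  let c : Finset O → ℕ := fun T => Fintype.equivFin (Finset O) T + 1
  have hc : Function.Injective c := fun _ _ h =>
    (Fintype.equivFin _).injective (Fin.ext (Nat.succ_injective h))
  have hc0 : ∀ T, c T ≠ 0 := fun T => Nat.succ_ne_zero _
  let N := insert 0 (𝒯.image c)
  have h0 : 0 ∈ N := Finset.mem_insert_self _ _
  have hN : N.erase 0 = 𝒯.image c := Finset.erase_insert (by simp [hc0])
  let P : Profile (Finset O) N := fun i _ => if i = 0 then P0 else sepPref (Function.invFun c i)
  have hP : P.inDomain (SepDom O ∪ {P0}) := fun i _ => by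
    dsimp only [P]
    split_ifs
    exacts [Or.inr rfl, Or.inl (separable_sepPref _)]
  have hrest :
      distinctTops (fun j (hj : j ∈ N.erase 0) => P j (Finset.mem_of_mem_erase hj)) = 𝒯 := by
    ext T
    rw [mem_distinctTops]
    constructor
    · rintro ⟨j, hj, rfl⟩
      rw [hN] at hj
      obtain ⟨S, hS, rfl⟩ := Finset.mem_image.1 hj
      simp [P, hc0, Function.leftInverse_invFun hc S, sepPref_top, hS]
    · intro hT
      exact ⟨c T, hN ▸ Finset.mem_image_of_mem c hT,
        by simp [P, hc0, Function.leftInverse_invFun hc T, sepPref_top]⟩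
  have hcard : N.card = 𝒯.card + 1 := by
    rw [← Finset.card_erase_add_one h0, hN, Finset.card_image_of_injective _ hc]
  refine ⟨N, by rw [hcard]; have := h𝒯.card_pos; omega, 0, h0, P, hP, ?_⟩
  rw [hg.eq_strictMajority ⟨0, h0⟩ hP, distinctTops_eq_insert_erase P h0, hrest,
    hg.eq_strictMajority (hN ▸ h𝒯.image c) fun j hj => hP j (Finset.mem_of_mem_erase hj),
    hrest]
  exact h

end Participation

lemma Pref.exists_misordered_insert {O : Type*} [Fintype O] [DecidableEq O]
    {p : Pref (Finset O)} (hns : ¬ Separable p) :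
    ∃ B a, a ∉ B ∧ (p.pref (insert a B) B ↔ a ∉ p.top) := by
  obtain ⟨S, x, hxS, hS⟩ :
      ∃ S x, x ∉ S ∧ ¬ (p.pref (insert x S) S ↔ p.pref {x} ∅) := by
    simpa [Separable] using hns
  by_cases h : p.pref (insert x S) S ↔ x ∉ p.top
  · exact ⟨S, x, hxS, h⟩
  · refine ⟨∅, x, Finset.notMem_empty x, ?_⟩
    rw [Finset.insert_empty]
    tauto

theorem stmt_8_general {O : Type*} [Fintype O] [DecidableEq O]
    (P0 : Pref (Finset O)) (hns : ¬ Separable P0) (htop : P0.top ≠ (∅ : Finset O)) :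
    ∀ g : Rule (Finset O), IsTopsOnlyExtensionOn (SepDom O ∪ {P0}) (fGt O) g →
      ∃ (N : Finset ℕ) (_ : 2 ≤ N.card) (i : ℕ) (hi : i ∈ N) (P : Profile (Finset O) N),
        P.inDomain (SepDom O ∪ {P0}) ∧
        (P i hi).pref (g (N.erase i) (fun j hj => P j (Finset.mem_of_mem_erase hj)))
          (g N P) := by
  intro g hg
  obtain ⟨B, a, haB, hmis⟩ := Pref.exists_misordered_insert hns
  by_cases hat : a ∈ P0.top
  · have hpref : P0.pref B (insert a B) :=
      P0.pref_of_not_pref (Finset.ne_insert_of_notMem _ _ haB) fun h => hmis.1 h hat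
    have htop_ne : P0.top ≠ insert a B := fun h => P0.not_pref_top B (h ▸ hpref)
    refine exists_participation_failure hg (𝒯 := {B, insert a B})
      (Finset.insert_nonempty _ _) ?_
    rwa [strictMajority_pair haB, strictMajority_insert_pair hat haB htop_ne]
  · have hpref : P0.pref (insert a B) B := hmis.2 hat
    have htop_ne : P0.top ≠ B := fun h => P0.not_pref_top (insert a B) (h ▸ hpref)
    have htop_nonempty : P0.top.Nonempty := Finset.nonempty_iff_ne_empty.2 htop
    refine exists_participation_failure hg (𝒯 := {insert a B, B, insert a B ∆ P0.top})
      (Finset.insert_nonempty _ _) ?_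
    rwa [strictMajority_triple haB hat htop_nonempty,
      strictMajority_insert_triple haB hat htop_nonempty htop_ne]

/-- If `P0` is a non-separable preference whose top set is nonempty,
then every tops-only extension of `f^>` to the domain `𝒮 ∪ {P0}` violates participation:
some voter of some society strictly prefers the outcome obtained by abstaining. -/
theorem stmt_8 {O : Type*} [Fintype O] [DecidableEq O] (hO : 2 ≤ Fintype.card O)
    (P0 : Pref (Finset O)) (hns : ¬ Separable P0) (htop : P0.top ≠ (∅ : Finset O)) :
    ∀ g : Rule (Finset O), IsTopsOnlyExtensionOn (SepDom O ∪ {P0}) (fGt O) g →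
      ∃ (N : Finset ℕ) (_ : 2 ≤ N.card) (i : ℕ) (hi : i ∈ N) (P : Profile (Finset O) N),
        P.inDomain (SepDom O ∪ {P0}) ∧
        (P i hi).pref (g (N.erase i) (fun j hj => P j (Finset.mem_of_mem_erase hj)))
          (g N P) :=
  stmt_8_general P0 hns htop
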